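/- arXiv:2012.05838 — 3 statements merged into one kernel-verified Lean document; each statement's English description precedes it below -/
import Mathlib

section
/- Let k be a field and let P = k[x₁, x₂, y, u] be the polynomial ring graded by weighted degree with weights w(x₁) = w(x₂) = 1, w(y) = 2, w(u) = 3. Then for every natural number m, the Hilbert function of the quotient ring P/(x₁³ − x₂y) at degree m, i.e., the k-dimension of the image of the space of weighted-homogeneous polynomials of weighted degree m under the quotient map, equals (⌊m/2⌋ + 1) · (⌊(m+1)/2⌋ + 1). -/
/-!
Since `f = x₁³ - x₂y` is weighted homogeneous of degree 3 and a non-zero-divisor, the degree-`m`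
part of `(f)` is `f • P_{m-3}`, so the Hilbert function of `P/(f)` is `dim P_m - dim P_{m-3}`.
Sorting the monomials of `P_m` by whether `u` divides them, this difference is the number of
monomials of degree `m` in `x₁, x₂, y` alone, which satisfies `N(m) = (m + 1) + N(m - 2)`.
-/

open Module MvPolynomial Finsupp DirectSum

section Graded

variable {k A : Type*} [Field k] [CommRing A] [Algebra k A] (𝒜 : ℕ → Submodule k A)
  [GradedAlgebra 𝒜] {f : A} {d n : ℕ}

theorem eq_mul_decompose_of_eq_mul {x q : A} (hf : f ∈ 𝒜 d) (hx : x ∈ 𝒜 n) (hxq : x = f * q)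
    (hdn : d ≤ n) : x = f * decompose 𝒜 q (n - d) := by
  rw [← coe_decompose_mul_of_left_mem_of_le 𝒜 hf hdn, ← hxq, decompose_of_mem_same 𝒜 hx]

theorem eq_zero_of_eq_mul_of_lt {x q : A} (hf : f ∈ 𝒜 d) (hx : x ∈ 𝒜 n) (hxq : x = f * q)
    (hnd : n < d) : x = 0 := by
  rw [← decompose_of_mem_same 𝒜 hx, hxq,
    coe_decompose_mul_of_left_mem_of_not_le 𝒜 hf (Nat.not_le.mpr hnd)]

theorem finrank_map_mk_span_singleton_add_finrank [FiniteDimensional k (𝒜 n)] (hf : f ∈ 𝒜 d)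
    (hreg : IsLeftRegular f) (hdn : d ≤ n) :
    finrank k ((𝒜 n).map (Ideal.Quotient.mkₐ k (Ideal.span {f})).toLinearMap) +
      finrank k (𝒜 (n - d)) = finrank k (𝒜 n) := by
  let φ := (Ideal.Quotient.mkₐ k (Ideal.span {f})).toLinearMap.domRestrict (𝒜 n)
  let ψ : 𝒜 (n - d) →ₗ[k] 𝒜 n := (LinearMap.mulLeft k f).restrict fun q hq ↦
    Nat.add_sub_cancel' hdn ▸ SetLike.mul_mem_graded hf hq
  have hψ : Function.Injective ψ := fun a b h ↦ Subtype.ext (hreg (congrArg Subtype.val h))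
  have hker : LinearMap.ker φ = LinearMap.range ψ := by
    ext ⟨x, hx⟩
    simp only [LinearMap.mem_ker, φ, LinearMap.domRestrict_apply, AlgHom.toLinearMap_apply,
      Ideal.Quotient.mkₐ_eq_mk, Ideal.Quotient.eq_zero_iff_mem, Ideal.mem_span_singleton]
    constructor
    · rintro ⟨q, hxq⟩
      exact ⟨⟨_, SetLike.coe_mem _⟩,
        Subtype.ext (eq_mul_decompose_of_eq_mul 𝒜 hf hx hxq hdn).symm⟩
    · rintro ⟨q, hq⟩
      exact ⟨q, (congrArg Subtype.val hq).symm⟩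
  rw [← LinearMap.range_domRestrict, ← LinearMap.finrank_range_of_inj hψ, ← hker,
    LinearMap.finrank_range_add_finrank_ker]

theorem finrank_map_mk_span_singleton_of_lt (hf : f ∈ 𝒜 d) (hnd : n < d) :
    finrank k ((𝒜 n).map (Ideal.Quotient.mkₐ k (Ideal.span {f})).toLinearMap) =
      finrank k (𝒜 n) := by
  rw [← LinearMap.range_domRestrict]
  refine LinearMap.finrank_range_of_inj <| (injective_iff_map_eq_zero _).mpr fun ⟨x, hx⟩ hφx ↦ ?_
  simp only [LinearMap.domRestrict_apply, AlgHom.toLinearMap_apply, Ideal.Quotient.mkₐ_eq_mk,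
    Ideal.Quotient.eq_zero_iff_mem, Ideal.mem_span_singleton] at hφx
  obtain ⟨q, hxq⟩ := hφx
  exact Subtype.ext (eq_zero_of_eq_mul_of_lt 𝒜 hf hx hxq hnd)

end Graded

theorem MvPolynomial.finrank_weightedHomogeneousSubmodule {σ M R : Type*} [AddCommMonoid M]
    [CommRing R] [Nontrivial R] (w : σ → M) (n : M) :
    finrank R (weightedHomogeneousSubmodule R w n) = Nat.card {d : σ →₀ ℕ | weight w d = n} := by
  rw [weightedHomogeneousSubmodule_eq_finsupp_supported]
  exact finrank_eq_nat_card_basis (basisRestrictSupport R _)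

section Count

variable {σ : Type*} (w : σ → ℕ)

noncomputable def monomialCount (s : Finset σ) (n : ℕ) : ℕ :=
  {d : σ →₀ ℕ | d.support ⊆ s ∧ weight w d = n}.ncard

theorem monomialCount_empty (n : ℕ) : monomialCount w ∅ n = if n = 0 then 1 else 0 := by
  have : {d : σ →₀ ℕ | d.support ⊆ ∅ ∧ weight w d = n} = if n = 0 then {0} else ∅ := by
    ext d
    split_ifs with hn <;> simp [Finsupp.support_eq_empty, hn, eq_comm] <;> rintro rfl <;>
      simp [hn]
  rw [monomialCount, this]
  split_ifs <;> simp

theorem monomialCount_univ [Fintype σ] (n : ℕ) :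
    monomialCount w Finset.univ n = Nat.card {d : σ →₀ ℕ | weight w d = n} := by
  simp [monomialCount, Nat.card_coe_set_eq]

variable [DecidableEq σ]

theorem support_subset_of_subset_insert {d : σ →₀ ℕ} {i : σ} {s : Finset σ}
    (hds : d.support ⊆ insert i s) (hdi : d i = 0) : d.support ⊆ s :=
  Finset.erase_eq_of_notMem (notMem_support_iff.mpr hdi) ▸ Finset.subset_insert_iff.mp hds

theorem setOf_support_subset_insert {i : σ} {s : Finset σ} (n : ℕ) :
    {d : σ →₀ ℕ | d.support ⊆ insert i s ∧ weight w d = n + w i} =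
      {d | d.support ⊆ s ∧ weight w d = n + w i} ∪
        (· + single i 1) '' {d | d.support ⊆ insert i s ∧ weight w d = n} := by
  ext d
  simp only [Set.mem_ofPred_eq, Set.mem_union, Set.mem_image]
  constructor
  · rintro ⟨hds, hdw⟩
    by_cases hdi : d i = 0
    · left; exact ⟨support_subset_of_subset_insert hds hdi, hdw⟩
    · right
      refine ⟨d - single i 1, ⟨?_, ?_⟩, sub_add_single_one_cancel hdi⟩
      · exact support_tsub.trans hds
      · have := weight_sub_single_add (w := w) hdi
        omega
  · rintro (⟨hds, hdw⟩ | ⟨d, ⟨hds, hdw⟩, rfl⟩)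
    · exact ⟨hds.trans (Finset.subset_insert _ _), hdw⟩
    · exact ⟨support_add.trans (Finset.union_subset hds (support_single_subset.trans (by simp))),
        by simp [weight_single, hdw]⟩

theorem monomialCount_insert_add [Finite σ] (hw : ∀ x, w x ≠ 0) {i : σ} {s : Finset σ}
    (hi : i ∉ s) (n : ℕ) :
    monomialCount w (insert i s) (n + w i) =
      monomialCount w s (n + w i) + monomialCount w (insert i s) n := by
  have hfin (t : Finset σ) (m : ℕ) : {d : σ →₀ ℕ | d.support ⊆ t ∧ weight w d = m}.Finite :=
    (finite_of_nat_weight_eq w hw m).subset fun d hd ↦ hd.2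
  rw [monomialCount, setOf_support_subset_insert,
    Set.ncard_union_eq _ (hfin _ _) ((hfin _ _).image _),
    Set.ncard_image_of_injective _ (add_left_injective _)]
  · rfl
  rw [Set.disjoint_left]
  rintro _ ⟨hds, -⟩ ⟨d, -, rfl⟩
  exact hi (hds (mem_support_iff.mpr (by simp)))

theorem monomialCount_insert_of_lt {i : σ} {s : Finset σ} {n : ℕ} (hn : n < w i) :
    monomialCount w (insert i s) n = monomialCount w s n := by
  refine congrArg Set.ncard (Set.ext fun d ↦ ⟨fun ⟨hds, hdw⟩ ↦ ⟨?_, hdw⟩, fun ⟨hds, hdw⟩ ↦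
    ⟨hds.trans (Finset.subset_insert _ _), hdw⟩⟩)
  refine support_subset_of_subset_insert hds (by_contra fun hdi ↦ ?_)
  have := le_weight_of_ne_zero' w hdi
  omega

end Count

-- The variables `x₁, x₂, y, u` are `X 0, X 1, X 2, X 3`.
local notation "w₀" => (![1, 1, 2, 3] : Fin 4 → ℕ)

theorem weights_ne_zero : ∀ i, w₀ i ≠ 0 := by decide

theorem monomialCount_x₁ (n : ℕ) : monomialCount w₀ {0} n = 1 := by
  induction n with
  | zero =>
    exact (monomialCount_insert_of_lt w₀ (s := ∅) zero_lt_one).trans (monomialCount_empty w₀ 0)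
  | succ n ih =>
    refine (monomialCount_insert_add w₀ weights_ne_zero (Finset.notMem_empty 0) n).trans ?_
    simp [monomialCount_empty, ih]

theorem monomialCount_x₁x₂ (n : ℕ) : monomialCount w₀ {1, 0} n = n + 1 := by
  induction n with
  | zero => exact (monomialCount_insert_of_lt w₀ zero_lt_one).trans (monomialCount_x₁ 0)
  | succ n ih =>
    refine (monomialCount_insert_add w₀ weights_ne_zero (by decide) n).trans ?_
    simp [monomialCount_x₁, ih, add_comm]

theorem monomialCount_x₁x₂y (n : ℕ) :
    monomialCount w₀ {2, 1, 0} n = (n / 2 + 1) * ((n + 1) / 2 + 1) := by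
  induction n using Nat.strong_induction_on with
  | _ n ih =>
  rcases lt_or_ge n 2 with hn | hn
  · rw [monomialCount_insert_of_lt w₀ hn, monomialCount_x₁x₂]
    interval_cases n <;> rfl
  · obtain ⟨n, rfl⟩ := Nat.exists_eq_add_of_le' hn
    refine (monomialCount_insert_add w₀ weights_ne_zero (by decide) n).trans ?_
    rw [ih n (by omega), monomialCount_x₁x₂]
    have hdiv : (n + 2) / 2 = n / 2 + 1 := by omega
    have hdiv' : (n + 2 + 1) / 2 = (n + 1) / 2 + 1 := by omega
    have hsum : n / 2 + (n + 1) / 2 = n := by omega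
    simp only [Matrix.cons_val, hdiv, hdiv']
    linarith

theorem monomialCount_x₁x₂yu_add_three (n : ℕ) :
    monomialCount w₀ {3, 2, 1, 0} (n + 3) =
      monomialCount w₀ {2, 1, 0} (n + 3) + monomialCount w₀ {3, 2, 1, 0} n := by
  exact monomialCount_insert_add w₀ weights_ne_zero (i := 3) (s := {2, 1, 0}) (by decide) n

theorem monomialCount_x₁x₂yu_of_lt {n : ℕ} (hn : n < 3) :
    monomialCount w₀ {3, 2, 1, 0} n = monomialCount w₀ {2, 1, 0} n :=
  monomialCount_insert_of_lt w₀ hn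

theorem cubic_mem_weightedHomogeneousSubmodule (k : Type*) [CommRing k] :
    (X 0 ^ 3 - X 1 * X 2 : MvPolynomial (Fin 4) k) ∈ weightedHomogeneousSubmodule k w₀ 3 :=
  sub_mem ((isWeightedHomogeneous_X k w₀ 0).pow 3)
    ((isWeightedHomogeneous_X k w₀ 1).mul (isWeightedHomogeneous_X k w₀ 2))

theorem cubic_ne_zero (k : Type*) [CommRing k] [Nontrivial k] :
    (X 0 ^ 3 - X 1 * X 2 : MvPolynomial (Fin 4) k) ≠ 0 := fun h ↦ by
  simpa using congrArg (eval ![1, 0, 0, 0]) h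

theorem finrank_weightedHomogeneousSubmodule_w₀ (k : Type*) [Field k] (n : ℕ) :
    finrank k (weightedHomogeneousSubmodule k w₀ n) = monomialCount w₀ {3, 2, 1, 0} n := by
  rw [finrank_weightedHomogeneousSubmodule, ← monomialCount_univ]
  congr
  decide

/-- Let `k` be a field and `P = k[x₁, x₂, y, u]` graded with weights `(1,1,2,3)`.
Then the Hilbert function of `P/(x₁³ - x₂y)` at degree `m`, i.e. the `k`-dimension of the
image of the weighted-homogeneous degree-`m` component of `P` under the quotient map, equals
`(⌊m/2⌋ + 1) * (⌊(m+1)/2⌋ + 1)`. -/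
theorem hilbert_function_index_three_subring (k : Type*) [Field k] (m : ℕ) :
    Module.finrank k
      (Submodule.map
        (Ideal.Quotient.mkₐ k (Ideal.span
          {(MvPolynomial.X 0 ^ 3 - MvPolynomial.X 1 * MvPolynomial.X 2 :
            MvPolynomial (Fin 4) k)})).toLinearMap
        (MvPolynomial.weightedHomogeneousSubmodule k (![1, 1, 2, 3] : Fin 4 → ℕ) m)) =
      (m / 2 + 1) * ((m + 1) / 2 + 1) := by
  let _ := weightedGradedAlgebra k w₀
  have hf := cubic_mem_weightedHomogeneousSubmodule k
  rw [← monomialCount_x₁x₂y]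
  rcases lt_or_ge m 3 with hm | hm
  · rw [finrank_map_mk_span_singleton_of_lt _ hf hm, finrank_weightedHomogeneousSubmodule_w₀,
      monomialCount_x₁x₂yu_of_lt hm]
  · have := Module.Finite.iff_fg.mpr (weightedHomogeneousSubmodule_fg k w₀ weights_ne_zero m)
    have hdim := finrank_map_mk_span_singleton_add_finrank _ hf
      (IsRegular.of_ne_zero (cubic_ne_zero k)).left hm
    obtain ⟨n, rfl⟩ := Nat.exists_eq_add_of_le' hm
    rw [finrank_weightedHomogeneousSubmodule_w₀, finrank_weightedHomogeneousSubmodule_w₀,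
      Nat.add_sub_cancel, monomialCount_x₁x₂yu_add_three] at hdim
    omega
end

section
/- Let M be the 3×3 rational matrix with rows (−4, 1, 0), (1, −3, 1), (0, 1, −2), and let Δ = (2/3, 2/3, 1/3) ∈ ℚ³. Then for every natural number m, the quantity {mΔ}ᵀ · M · ({mΔ} − {Δ}) equals 0, where {w} denotes the componentwise fractional part of a vector w ∈ ℚ³. -/
/-- The componentwise fractional part of a vector in `ℚ³`. -/
def fracVec (v : Fin 3 → ℚ) : Fin 3 → ℚ := fun i => Int.fract (v i)

/-! Since `3Δ` is integral, `{mΔ}` depends only on `m mod 3`. For `m ≡ 0` the first factor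
vanishes and for `m ≡ 1` the second one does. For `m ≡ 2`, `M` maps
`{2Δ} - {Δ} = (-1/3, -1/3, 1/3)` to `(1, 1, -1)`, which is orthogonal to `{2Δ} = (1/3, 1/3, 2/3)`. -/

theorem Int.fract_natCast_mul_eq_fract_mod_mul {α : Type*} [CommRing α] [LinearOrder α]
    [IsStrictOrderedRing α] [FloorRing α] {x : α} {p : ℕ} {z : ℤ} (hx : (p : α) * x = z)
    (m : ℕ) : Int.fract ((m : α) * x) = Int.fract (((m % p : ℕ) : α) * x) := by
  have hsplit : (m : α) * x = ((m % p : ℕ) : α) * x + ((m / p : ℕ) * z : ℤ) := by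
    rw [Int.cast_mul, Int.cast_natCast, ← hx]
    conv_lhs => rw [← Nat.mod_add_div m p]
    rw [Nat.cast_add, Nat.cast_mul]
    ring
  rw [hsplit, Int.fract_add_intCast]

theorem fracVec_natCast_smul_eq_mod {v : Fin 3 → ℚ} {p : ℕ}
    (hv : ∀ i, ∃ z : ℤ, (p : ℚ) * v i = z) (m : ℕ) :
    fracVec ((m : ℚ) • v) = fracVec (((m % p : ℕ) : ℚ) • v) := by
  funext i
  obtain ⟨z, hz⟩ := hv i
  exact Int.fract_natCast_mul_eq_fract_mod_mul hz m

/-- For the intersection matrix `M` of the T-string `[4, 3, 2]` and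
`Δ = (2/3, 2/3, 1/3)`, the correction term `{mΔ}ᵀ · M · ({mΔ} - {Δ})` in Blache's
plurigenus formula vanishes for every natural number `m`. -/
theorem correction_term_vanishes_18_5 (m : ℕ) :
    dotProduct (fracVec ((m : ℚ) • ![2 / 3, 2 / 3, 1 / 3]))
      ((!![(-4 : ℚ), 1, 0; 1, -3, 1; 0, 1, -2]).mulVec
        (fracVec ((m : ℚ) • ![2 / 3, 2 / 3, 1 / 3]) - fracVec ![2 / 3, 2 / 3, 1 / 3])) = 0 := by
  have hperiod : ∀ i, ∃ z : ℤ, ((3 : ℕ) : ℚ) * ![2 / 3, 2 / 3, 1 / 3] i = z := by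
    intro i
    fin_cases i
    exacts [⟨2, by norm_num⟩, ⟨2, by norm_num⟩, ⟨1, by norm_num⟩]
  rw [fracVec_natCast_smul_eq_mod hperiod m]
  have hfract_one : fracVec ![2 / 3, 2 / 3, 1 / 3] = ![2 / 3, 2 / 3, 1 / 3] := by
    funext i
    fin_cases i <;> norm_num [fracVec, Int.fract_eq_iff]
  have hfract_two : fracVec ((2 : ℚ) • ![2 / 3, 2 / 3, 1 / 3]) = ![1 / 3, 1 / 3, 2 / 3] := by
    funext i
    fin_cases i <;> norm_num [fracVec, Int.fract_eq_iff]
  obtain hm | hm | hm : m % 3 = 0 ∨ m % 3 = 1 ∨ m % 3 = 2 := by omega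
  · rw [hm, Nat.cast_zero, zero_smul, show fracVec 0 = 0 from funext fun _ => Int.fract_zero,
      zero_dotProduct]
  · rw [hm, Nat.cast_one, one_smul, sub_self, Matrix.mulVec_zero, dotProduct_zero]
  · rw [hm, Nat.cast_two, hfract_two, hfract_one]
    simp only [dotProduct, Matrix.mulVec, Fin.sum_univ_three, Matrix.of_apply, Matrix.cons_val,
      Pi.sub_apply]
    norm_num
end

section
/- Let r ≥ 1 and let b₁, …, b_r be integers with bᵢ ≥ 2 for all i, and let d be a positive integer. If the Hirzebruch–Jung continued fraction value v([b₁, …, b_r]) equals 4d/(2d − 1), then the list [b₁, …, b_r] equals S_d, where S₁ = [4] and, for d ≥ 2, S_d = [3, 2, …, 2, 3] with d − 2 middle entries equal to 2. In particular r = max(d, 1) = d when d ≥ 2 and r = 1 when d = 1. -/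
/-!
With all entries `≥ 2` every tail value exceeds `1`, so `v([b₁, …, b_r])` lies in `(b₁ - 1, b₁)`
when `r ≥ 2` and equals `b₁` when `r = 1`. Hence `b₁ = ⌈v⌉`, the value is an integer exactly when
`r = 1`, and peeling off `b₁` shows that the expansion is unique. It then suffices to check that
`S_d` has value `4d/(2d - 1)`, which follows from `v([2, …, 2, 3]) = (2m + 3)/(2m + 1)` for `m` twos.
-/

/-- The Hirzebruch–Jung (negative) continued fraction value of a list of rationals:
`v([b]) = b` and `v([b₁, …, b_r]) = b₁ - 1 / v([b₂, …, b_r])`. -/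
def hjValue : List ℚ → ℚ
  | [] => 0
  | [b] => b
  | b :: l => b - 1 / hjValue l

/-- The T-string of the index-two T-singularity `1/(4d)(1, 2d-1)`, as a list of integers:
`S₁ = [4]` and, for `d ≥ 2`, `S_d = [3, 2, …, 2, 3]` with `d - 2` middle twos. -/
def indexTwoTStringZ (d : ℕ) : List ℤ :=
  if d = 1 then [4] else 3 :: (List.replicate (d - 2) 2 ++ [3])

theorem hjValue_cons {b : ℚ} {l : List ℚ} (hl : l ≠ []) : hjValue (b :: l) = b - 1 / hjValue l := by
  obtain ⟨c, t, rfl⟩ := List.exists_cons_of_ne_nil hl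
  rfl

theorem hjValue_cons_mem_Ioo {b : ℚ} {l : List ℚ} (hl : l ≠ []) (h : 1 < hjValue l) :
    hjValue (b :: l) ∈ Set.Ioo (b - 1) b := by
  have hpos : 0 < 1 / hjValue l := by positivity
  have hlt : 1 / hjValue l < 1 := (div_lt_one (by linarith)).2 h
  rw [hjValue_cons hl]
  constructor <;> linarith

theorem one_lt_hjValue : ∀ {l : List ℚ}, l ≠ [] → (∀ b ∈ l, 2 ≤ b) → 1 < hjValue l
  | [], hl, _ => absurd rfl hl
  | [b], _, hb => lt_of_lt_of_le one_lt_two (hb b List.mem_cons_self)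
  | b :: c :: l, _, hb => by
    have htail : 1 < hjValue (c :: l) :=
      one_lt_hjValue (List.cons_ne_nil c l) fun x hx => hb x (List.mem_cons_of_mem b hx)
    have hb2 : 2 ≤ b := hb b List.mem_cons_self
    linarith [(hjValue_cons_mem_Ioo (b := b) (List.cons_ne_nil c l) htail).1]

theorem hjValue_intCast_cons_mem_Ioo {b : ℤ} {l : List ℤ} (hl : l ≠ []) (hb : ∀ x ∈ l, 2 ≤ x) :
    hjValue ((b :: l).map (↑)) ∈ Set.Ioo ((b : ℚ) - 1) b := by
  have hl' : l.map (fun x : ℤ => (x : ℚ)) ≠ [] := by simpa using hl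
  refine hjValue_cons_mem_Ioo hl' (one_lt_hjValue hl' ?_)
  simp only [List.mem_map]
  rintro _ ⟨x, hx, rfl⟩
  exact_mod_cast hb x hx

theorem ceil_hjValue_intCast_cons {b : ℤ} {l : List ℤ} (hb : ∀ x ∈ l, 2 ≤ x) :
    ⌈hjValue ((b :: l).map (↑))⌉ = b := by
  rcases eq_or_ne l [] with rfl | hl
  · exact Int.ceil_intCast b
  · obtain ⟨hlo, hhi⟩ := hjValue_intCast_cons_mem_Ioo hl hb
    exact Int.ceil_eq_iff.2 ⟨hlo, hhi.le⟩

theorem hjValue_intCast_cons_ne_intCast {b : ℤ} {l : List ℤ} (hl : l ≠ []) (hb : ∀ x ∈ l, 2 ≤ x)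
    (n : ℤ) : hjValue ((b :: l).map (↑)) ≠ n := by
  intro h
  obtain ⟨hlo, hhi⟩ := hjValue_intCast_cons_mem_Ioo hl hb
  rw [h] at hlo hhi
  have : b - 1 < n := by exact_mod_cast hlo
  have : n < b := by exact_mod_cast hhi
  omega

theorem eq_of_hjValue_intCast_eq : ∀ {l₁ l₂ : List ℤ}, l₁ ≠ [] → l₂ ≠ [] →
    (∀ b ∈ l₁, 2 ≤ b) → (∀ b ∈ l₂, 2 ≤ b) →
    hjValue (l₁.map (↑)) = hjValue (l₂.map (↑)) → l₁ = l₂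
  | [], _, h₁, _, _, _, _ => absurd rfl h₁
  | _, [], _, h₂, _, _, _ => absurd rfl h₂
  | a :: s, b :: t, _, _, hb₁, hb₂, hv => by
    have hs : ∀ x ∈ s, 2 ≤ x := fun x hx => hb₁ x (List.mem_cons_of_mem a hx)
    have ht : ∀ x ∈ t, 2 ≤ x := fun x hx => hb₂ x (List.mem_cons_of_mem b hx)
    have hab : a = b := by
      rw [← ceil_hjValue_intCast_cons (b := a) hs, ← ceil_hjValue_intCast_cons (b := b) ht, hv]
    subst hab
    rcases eq_or_ne s [] with rfl | hsne <;> rcases eq_or_ne t [] with rfl | htne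
    · rfl
    · exact absurd hv.symm (hjValue_intCast_cons_ne_intCast htne ht a)
    · exact absurd hv (hjValue_intCast_cons_ne_intCast hsne hs a)
    · have hs' : s.map (fun x : ℤ => (x : ℚ)) ≠ [] := by simpa using hsne
      have ht' : t.map (fun x : ℤ => (x : ℚ)) ≠ [] := by simpa using htne
      simp only [List.map_cons, hjValue_cons hs', hjValue_cons ht', sub_right_inj, one_div,
        inv_inj] at hv
      rw [eq_of_hjValue_intCast_eq hsne htne hs ht hv]

theorem hjValue_replicate_two_append_three (m : ℕ) :
    hjValue (List.replicate m 2 ++ [3]) = (2 * m + 3) / (2 * m + 1) := by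
  induction m with
  | zero => norm_num [hjValue]
  | succ m ih =>
    rw [List.replicate_succ, List.cons_append, hjValue_cons (by simp), ih]
    field_simp
    push_cast
    ring

theorem hjValue_indexTwoTStringZ {d : ℕ} (hd : 1 ≤ d) :
    hjValue ((indexTwoTStringZ d).map (↑)) = 4 * d / (2 * d - 1) := by
  match d, hd with
  | 1, _ => norm_num [indexTwoTStringZ, hjValue]
  | m + 2, _ =>
    have hrepl : (List.replicate m (2 : ℤ) ++ [3]).map (fun x : ℤ => (x : ℚ)) =
        List.replicate m 2 ++ [3] := by simp
    rw [indexTwoTStringZ, if_neg (by omega), Nat.add_sub_cancel, List.map_cons, hrepl,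
      hjValue_cons (by simp), hjValue_replicate_two_append_three]
    push_cast
    rw [show 2 * ((m : ℚ) + 2) - 1 = 2 * m + 3 by ring]
    field_simp
    ring

theorem two_le_of_mem_indexTwoTStringZ {d : ℕ} {b : ℤ} (hb : b ∈ indexTwoTStringZ d) : 2 ≤ b := by
  unfold indexTwoTStringZ at hb
  split_ifs at hb
  · simp_all
  · simp only [List.mem_cons, List.mem_append, List.mem_replicate, List.not_mem_nil,
      or_false] at hb
    omega

theorem indexTwoTStringZ_ne_nil (d : ℕ) : indexTwoTStringZ d ≠ [] := by
  unfold indexTwoTStringZ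
  split_ifs <;> simp

theorem length_indexTwoTStringZ {d : ℕ} (hd : 1 ≤ d) : (indexTwoTStringZ d).length = d := by
  unfold indexTwoTStringZ
  split_ifs with h
  · simp [h]
  · simp only [List.length_cons, List.length_append, List.length_replicate, List.length_nil]
    omega

/-- If `b₁, …, b_r` are integers `≥ 2` whose Hirzebruch–Jung continued fraction value is
`4d / (2d - 1)` for a positive integer `d`, then `[b₁, …, b_r] = S_d`; in particular
`r = max d 1 = d`. -/
theorem indexTwo_TString_classification (l : List ℤ) (hl : l ≠ [])
    (hb : ∀ b ∈ l, (2 : ℤ) ≤ b) (d : ℕ) (hd : 1 ≤ d)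
    (hv : hjValue (l.map (fun b => (b : ℚ))) = (4 * d) / (2 * d - 1)) :
    l = indexTwoTStringZ d ∧ l.length = max d 1 ∧ l.length = d := by
  -- `l.map (fun b => (b : ℚ))` elaborates with `l` coerced to `List ℚ` as a monadic lift.
  simp only [List.pure_def, List.bind_eq_flatMap, List.map_id_fun', id_eq,
    ← List.map_eq_flatMap] at hv
  have hS : l = indexTwoTStringZ d :=
    eq_of_hjValue_intCast_eq hl (indexTwoTStringZ_ne_nil d) hb
      (fun _ => two_le_of_mem_indexTwoTStringZ) (hv.trans (hjValue_indexTwoTStringZ hd).symm)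
  have hlen : l.length = d := hS ▸ length_indexTwoTStringZ hd
  exact ⟨hS, by omega, hlen⟩
end
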